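/- Let G be a simple graph on [n] (with every vertex belonging to at least one edge, n ≥ 2) and K a field with the lexicographic order on K[x_1,...,x_n,y_1,...,y_n] induced by x_1 > ... > x_n > y_1 > ... > y_n. The binomials {f_{ij} = x_i y_j − x_j y_i : {i,j} ∈ E(G), i<j} form a Gröbner basis of J_G if and only if G is closed with respect to the labeling, i.e., for all edges {i,j},{k,l} with i<j, k<l: i=k implies {j,l} ∈ E(G) and j=l implies {i,k} ∈ E(G). -/

import Mathlib

open MvPolynomial

/-!
We work in `K[x_1,…,x_n,y_1,…,y_n]`, realized as `MvPolynomial (Lex (Fin n ⊕ Fin n)) K`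
where `x_i = X (toLex (Sum.inl i))` and `y_i = X (toLex (Sum.inr i))`.  The linear order
on `Lex (Fin n ⊕ Fin n)` (with the smallest element being the most significant variable)
together with the lexicographic order on exponents `Lex ((Lex (Fin n ⊕ Fin n)) →₀ ℕ)`
realizes exactly the lexicographic monomial order induced by
`x_1 > x_2 > … > x_n > y_1 > … > y_n`.
-/

/-- A simple graph on `Fin n` is *closed with respect to the given labeling*. -/
def SimpleGraph.IsClosed {n : ℕ} (G : SimpleGraph (Fin n)) : Prop :=
  ∀ ⦃i j k l : Fin n⦄, G.Adj i j → G.Adj k l → i < j → k < l →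
    (i = k → j ≠ l → G.Adj j l) ∧ (j = l → i ≠ k → G.Adj i k)

/-- The binomial `f_{ij} = x_i y_j - x_j y_i`. -/
noncomputable def edgeBinomial (K : Type*) [Field K] {n : ℕ} (i j : Fin n) :
    MvPolynomial (Lex (Fin n ⊕ Fin n)) K :=
  X (toLex (Sum.inl i)) * X (toLex (Sum.inr j)) -
    X (toLex (Sum.inl j)) * X (toLex (Sum.inr i))

/-- The binomial edge ideal `J_G` of a simple graph `G` on `[n]`. -/
noncomputable def binomialEdgeIdeal (K : Type*) [Field K] {n : ℕ}
    (G : SimpleGraph (Fin n)) : Ideal (MvPolynomial (Lex (Fin n ⊕ Fin n)) K) :=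
  Ideal.span {p | ∃ i j : Fin n, G.Adj i j ∧ i < j ∧ p = edgeBinomial K i j}

/-- The exponent of the leading monomial of a polynomial with respect to the
lexicographic order induced by `x_1 > … > x_n > y_1 > … > y_n`. -/
noncomputable def leadExp {K : Type*} [Field K] {n : ℕ}
    (f : MvPolynomial (Lex (Fin n ⊕ Fin n)) K) : Lex (Fin n ⊕ Fin n) →₀ ℕ :=
  ofLex (f.support.sup (fun d => toLex d))

/-!
Gröbner basis ⇒ closed: if `{i,j}` and `{i,l}` are edges with `i < j < l`, then
`y_j f_{il} - y_l f_{ij} = x_j y_i y_l - x_l y_i y_j` lies in `J_G`, and the only monomial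
`x_p y_q` (`p < q`) dividing its leading monomial `x_j y_i y_l` is `x_j y_l`, so `{j,l}` is an
edge. Dually, `x_k f_{ij} - x_i f_{kj} = x_i x_j y_k - x_j x_k y_i` handles edges `{i,j}`, `{k,j}`
with `i < k < j`.

Closed ⇒ Gröbner basis: read `f_{ij}` as the rewriting rule `x_i y_j ↦ x_j y_i` on monomials.
Each step lowers a monomial in the lex order, and closedness makes every critical pair close
in at most one step on each side, so by Church–Rosser each class of the generated equivalence
has a unique irreducible element, which is its lex-minimum. Summing the coefficients of a
polynomial over one class is a linear functional vanishing on `J_G`. If the leading monomial of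
`0 ≠ f ∈ J_G` were divisible by no `x_i y_j` with `{i,j} ∈ E(G)`, it would be irreducible, hence
the only monomial of `f` in its class, and the functional would return its nonzero coefficient.
-/

theorem Finsupp.exists_eq_add_of_add_eq_add {α : Type*} {c₁ c₂ m₁ m₂ : α →₀ ℕ}
    (hm : Disjoint m₁ m₂) (h : c₁ + m₁ = c₂ + m₂) : ∃ c, c₁ = c + m₂ ∧ c₂ = c + m₁ := by
  have hle : m₂ ≤ c₁ := fun s => by
    have hs := DFunLike.congr_fun h s
    have : m₁ s = 0 ∨ m₂ s = 0 := by
      by_contra! h0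
      exact Finset.disjoint_left.1 (Finsupp.disjoint_iff.1 hm)
        (Finsupp.mem_support_iff.2 h0.1) (Finsupp.mem_support_iff.2 h0.2)
    simp only [Finsupp.add_apply] at hs
    omega
  obtain ⟨c, rfl⟩ := exists_add_of_le hle
  refine ⟨c, add_comm _ _, add_right_cancel (b := m₂) ?_⟩
  rw [← h]
  abel

theorem Finsupp.exists_eq_add_single_of_add_single_eq {α : Type*} {c₁ c₂ : α →₀ ℕ} {s t : α}
    (hst : s ≠ t) (h : c₁ + single s 1 = c₂ + single t 1) :
    ∃ c, c₁ = c + single t 1 ∧ c₂ = c + single s 1 :=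
  exists_eq_add_of_add_eq_add
    (Finsupp.disjoint_iff.2 ((support_single_disjoint one_ne_zero one_ne_zero).2 hst)) h

theorem AddMonoidHom.eq_zero_of_mem_span {A M : Type*} [CommRing A] [AddCommGroup M]
    (φ : A →+ M) {s : Set A} (hs : ∀ g ∈ s, ∀ p, φ (p * g) = 0) {f : A}
    (hf : f ∈ Ideal.span s) : φ f = 0 := by
  suffices ∀ p, φ (p * f) = 0 by simpa using this 1
  induction hf using Submodule.span_induction with
  | mem g hg => exact hs g hg
  | zero => simp
  | add x y _ _ hx hy => intro p; rw [mul_add, map_add, hx, hy, add_zero]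
  | smul a x _ hx => intro p; rw [smul_eq_mul, ← mul_assoc, hx]

section CoeffSum

variable {σ R : Type*} [CommRing R]

noncomputable def coeffSum (S : Set (σ →₀ ℕ)) : MvPolynomial σ R →ₗ[R] R :=
  Finsupp.linearCombination R (S.indicator 1) ∘ₗ
    (AddMonoidAlgebra.coeffLinearEquiv R).toLinearMap

variable {S : Set (σ →₀ ℕ)}

theorem coeffSum_monomial (u : σ →₀ ℕ) (c : R) :
    coeffSum S (monomial u c) = c * S.indicator 1 u :=
  Finsupp.linearCombination_single R c u

open Classical in
theorem coeffSum_apply (f : MvPolynomial σ R) :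
    coeffSum S f = ∑ e ∈ f.support with e ∈ S, coeff e f := by
  simp only [coeffSum, LinearMap.coe_comp, LinearEquiv.coe_coe, Function.comp_apply,
    AddMonoidAlgebra.coeffLinearEquiv_apply, Finsupp.linearCombination_apply, Finsupp.sum,
    Set.indicator_apply, Pi.one_apply, smul_eq_mul, mul_ite, mul_one, mul_zero, Finset.sum_filter]
  rfl

theorem coeffSum_eq_coeff {f : MvPolynomial σ R} {d : σ →₀ ℕ} (hd : d ∈ S)
    (h : ∀ e ∈ f.support, e ∈ S → e = d) : coeffSum S f = coeff d f := by
  classical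
  rw [coeffSum_apply]
  refine Finset.sum_eq_single d (fun e he hne => ?_) (fun hd' => ?_)
  · rw [Finset.mem_filter] at he
    exact absurd (h e he.1 he.2) hne
  · exact notMem_support_iff.1 fun hdf => hd' (Finset.mem_filter.2 ⟨hdf, hd⟩)

theorem coeffSum_mul_monomial_sub_monomial {a b : σ →₀ ℕ} (hS : ∀ u, u + a ∈ S ↔ u + b ∈ S)
    (p : MvPolynomial σ R) : coeffSum S (p * (monomial a 1 - monomial b 1)) = 0 := by
  classical
  induction p using MvPolynomial.induction_on' with
  | monomial u c =>
    simp only [mul_sub, monomial_mul, mul_one, map_sub, coeffSum_monomial, Set.indicator_apply,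
      hS u, Pi.one_apply, sub_self]
  | add p q hp hq => rw [add_mul, map_add, hp, hq, add_zero]

end CoeffSum

namespace BinomialEdgeIdeal

variable {n : ℕ}

def xVar (i : Fin n) : Lex (Fin n ⊕ Fin n) := toLex (Sum.inl i)

def yVar (i : Fin n) : Lex (Fin n ⊕ Fin n) := toLex (Sum.inr i)

theorem xVar_injective : Function.Injective (xVar (n := n)) :=
  fun _ _ h => Sum.inl_injective (toLex.injective h)

theorem yVar_injective : Function.Injective (yVar (n := n)) :=
  fun _ _ h => Sum.inr_injective (toLex.injective h)

noncomputable def xyExp (i j : Fin n) : Lex (Fin n ⊕ Fin n) →₀ ℕ :=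
  Finsupp.single (xVar i) 1 + Finsupp.single (yVar j) 1

theorem toLex_xyExp_lt {i j : Fin n} (h : i < j) : toLex (xyExp j i) < toLex (xyExp i j) := by
  refine Finsupp.Lex.lt_iff.2 ⟨xVar i, fun t ht => ?_, ?_⟩
  · obtain ⟨a | a, rfl⟩ := toLex.surjective t
    · have ha : a < i := by simpa [xVar] using ht
      simp [xyExp, xVar, yVar, ha.ne, (ha.trans h).ne]
    · simp [xVar] at ht
  · simp [xyExp, xVar, yVar, h.ne]

theorem toLex_add_xyExp_lt {i j : Fin n} (h : i < j) (c : Lex (Fin n ⊕ Fin n) →₀ ℕ) :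
    toLex (c + xyExp j i) < toLex (c + xyExp i j) := by
  rw [toLex_add, toLex_add]
  exact add_lt_add_right (toLex_xyExp_lt h) _

theorem apply_ne_zero_of_xyExp_le {i j : Fin n} {d : Lex (Fin n ⊕ Fin n) →₀ ℕ}
    (h : xyExp i j ≤ d) : d (xVar i) ≠ 0 ∧ d (yVar j) ≠ 0 := by
  constructor
  · exact Nat.one_le_iff_ne_zero.1 (by simpa [xyExp, xVar, yVar] using h (xVar i))
  · exact Nat.one_le_iff_ne_zero.1 (by simpa [xyExp, xVar, yVar] using h (yVar j))

theorem disjoint_xyExp {i j k l : Fin n} (hik : i ≠ k) (hjl : j ≠ l) :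
    Disjoint (xyExp i j) (xyExp k l) := by
  rw [Finsupp.disjoint_iff, Finset.disjoint_left]
  intro s
  obtain ⟨a | a, rfl⟩ := toLex.surjective s <;> simp [xyExp, xVar, yVar, Finsupp.single_apply]
  exacts [fun h h' => hik (h.trans h'.symm), fun h h' => hjl (h.trans h'.symm)]

section LeadExp

variable {K : Type*} [Field K]

theorem monomial_single_add_xyExp (s : Lex (Fin n ⊕ Fin n)) (i j : Fin n) :
    monomial (Finsupp.single s 1 + xyExp i j) (1 : K) = X s * X (xVar i) * X (yVar j) := by
  simp only [xyExp, ← add_assoc, monomial_add_single, pow_one]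
  rfl

theorem edgeBinomial_eq (i j : Fin n) :
    edgeBinomial K i j = monomial (xyExp i j) 1 - monomial (xyExp j i) 1 := by
  simp [edgeBinomial, xyExp, X, monomial_mul, xVar, yVar]

theorem leadExp_eq_degree (f : MvPolynomial (Lex (Fin n ⊕ Fin n)) K) :
    leadExp f = MonomialOrder.lex.degree f := rfl

theorem toLex_le_leadExp {f : MvPolynomial (Lex (Fin n ⊕ Fin n)) K}
    {e : Lex (Fin n ⊕ Fin n) →₀ ℕ} (he : e ∈ f.support) : toLex e ≤ toLex (leadExp f) :=
  MonomialOrder.le_degree (m := MonomialOrder.lex) he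

theorem coeff_leadExp_ne_zero {f : MvPolynomial (Lex (Fin n ⊕ Fin n)) K} (hf : f ≠ 0) :
    coeff (leadExp f) f ≠ 0 :=
  MonomialOrder.coeff_degree_ne_zero_iff (m := MonomialOrder.lex) |>.2 hf

theorem leadExp_monomial_sub_monomial {a b : Lex (Fin n ⊕ Fin n) →₀ ℕ}
    (h : toLex b < toLex a) : leadExp (monomial a (1 : K) - monomial b 1) = a := by
  classical
  rw [leadExp_eq_degree, MonomialOrder.degree_sub_of_lt] <;>
    simp only [MonomialOrder.degree_monomial, one_ne_zero, if_false]
  exact h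

theorem leadExp_edgeBinomial {i j : Fin n} (h : i < j) :
    leadExp (edgeBinomial K i j) = xyExp i j := by
  rw [edgeBinomial_eq, leadExp_monomial_sub_monomial (toLex_xyExp_lt h)]

end LeadExp

def EdgeBinomialsIsGroebnerBasis (K : Type*) [Field K] (G : SimpleGraph (Fin n)) : Prop :=
  ∀ f ∈ binomialEdgeIdeal K G, f ≠ 0 →
    ∃ i j : Fin n, G.Adj i j ∧ i < j ∧ leadExp (edgeBinomial K i j) ≤ leadExp f

variable {G : SimpleGraph (Fin n)}

/-- Reduction of a monomial modulo `f_{ij}`: a factor `x_i y_j` becomes `x_j y_i`. -/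
def EdgeStep (G : SimpleGraph (Fin n)) (d e : Lex (Fin n ⊕ Fin n) →₀ ℕ) : Prop :=
  ∃ i j c, G.Adj i j ∧ i < j ∧ d = c + xyExp i j ∧ e = c + xyExp j i

theorem EdgeStep.toLex_lt {d e : Lex (Fin n ⊕ Fin n) →₀ ℕ} (h : EdgeStep G d e) :
    toLex e < toLex d := by
  obtain ⟨i, j, c, -, hij, rfl, rfl⟩ := h
  exact toLex_add_xyExp_lt hij c

theorem toLex_le_of_reflTransGen_edgeStep {d e : Lex (Fin n ⊕ Fin n) →₀ ℕ}
    (h : Relation.ReflTransGen (EdgeStep G) d e) : toLex e ≤ toLex d := by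
  induction h with
  | refl => exact le_rfl
  | tail _ hstep ih => exact hstep.toLex_lt.le.trans ih

theorem exists_reflGen_edgeStep_swap {j l : Fin n} (hadj : G.Adj j l)
    (c : Lex (Fin n ⊕ Fin n) →₀ ℕ) : ∃ e, Relation.ReflGen (EdgeStep G) (c + xyExp j l) e ∧
      Relation.ReflGen (EdgeStep G) (c + xyExp l j) e := by
  rcases hadj.ne.lt_or_gt with h | h
  · exact ⟨_, .single ⟨j, l, c, hadj, h, rfl, rfl⟩, .refl⟩
  · exact ⟨_, .refl, .single ⟨l, j, c, hadj.symm, h, rfl, rfl⟩⟩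

theorem edgeStep_diamond (hG : G.IsClosed) {d e₁ e₂ : Lex (Fin n ⊕ Fin n) →₀ ℕ}
    (h₁ : EdgeStep G d e₁) (h₂ : EdgeStep G d e₂) :
    ∃ e, Relation.ReflGen (EdgeStep G) e₁ e ∧ Relation.ReflGen (EdgeStep G) e₂ e := by
  obtain ⟨i, j, c₁, hij, hij', rfl, rfl⟩ := h₁
  obtain ⟨k, l, c₂, hkl, hkl', hd, rfl⟩ := h₂
  by_cases hik : i = k <;> by_cases hjl : j = l
  · subst hik hjl
    obtain rfl := add_right_cancel hd
    exact ⟨_, .refl, .refl⟩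
  · subst hik
    obtain ⟨c, rfl, rfl⟩ := Finsupp.exists_eq_add_single_of_add_single_eq (c₁ := c₁) (c₂ := c₂)
      (yVar_injective.ne hjl) (add_right_cancel (b := Finsupp.single (xVar i) 1)
        (by convert hd using 1 <;> simp only [xyExp] <;> abel))
    convert exists_reflGen_edgeStep_swap ((hG hij hkl hij' hkl').1 rfl hjl)
      (c + Finsupp.single (yVar i) 1) using 4 <;> simp only [xyExp] <;> abel
  · subst hjl
    obtain ⟨c, rfl, rfl⟩ := Finsupp.exists_eq_add_single_of_add_single_eq (c₁ := c₁) (c₂ := c₂)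
      (xVar_injective.ne hik) (add_right_cancel (b := Finsupp.single (yVar j) 1)
        (by convert hd using 1 <;> simp only [xyExp] <;> abel))
    convert exists_reflGen_edgeStep_swap ((hG hij hkl hij' hkl').2 rfl hik).symm
      (c + Finsupp.single (xVar j) 1) using 4 <;> simp only [xyExp] <;> abel
  · obtain ⟨c, rfl, rfl⟩ := Finsupp.exists_eq_add_of_add_eq_add (disjoint_xyExp hik hjl) hd
    refine ⟨c + xyExp j i + xyExp l k, .single ⟨k, l, c + xyExp j i, hkl, hkl', ?_, rfl⟩,
      .single ⟨i, j, c + xyExp l k, hij, hij', ?_, ?_⟩⟩ <;> abel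

theorem eqvGen_edgeStep_le_join (hG : G.IsClosed) :
    Relation.EqvGen (EdgeStep G) ≤ Relation.Join (Relation.ReflTransGen (EdgeStep G)) := by
  have hequiv := Relation.equivalence_join_reflTransGen (r := EdgeStep G) fun _ _ _ h₁ h₂ =>
    (edgeStep_diamond hG h₁ h₂).imp fun _ he => ⟨he.1, he.2.to_reflTransGen⟩
  intro d d' h
  exact hequiv.eqvGen_iff.1 (Relation.EqvGen.mono (fun _ e he => ⟨e, .single he, .refl⟩) d d' h)

theorem toLex_le_of_eqvGen_edgeStep (hG : G.IsClosed) {d d' : Lex (Fin n ⊕ Fin n) →₀ ℕ}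
    (hd : ∀ e, ¬ EdgeStep G d e) (h : Relation.EqvGen (EdgeStep G) d d') :
    toLex d ≤ toLex d' := by
  obtain ⟨e, hde, hd'e⟩ := eqvGen_edgeStep_le_join hG d d' h
  obtain rfl : d = e := hde.cases_head.resolve_right fun ⟨c, hc, _⟩ => hd c hc
  exact toLex_le_of_reflTransGen_edgeStep hd'e

variable {K : Type*} [Field K]

theorem edgeBinomial_mem {i j : Fin n} (hadj : G.Adj i j) (hij : i < j) :
    edgeBinomial K i j ∈ binomialEdgeIdeal K G :=
  Ideal.subset_span ⟨i, j, hadj, hij, rfl⟩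

theorem coeffSum_eqvGen_eq_zero {f : MvPolynomial (Lex (Fin n ⊕ Fin n)) K}
    (hf : f ∈ binomialEdgeIdeal K G) (d : Lex (Fin n ⊕ Fin n) →₀ ℕ) :
    coeffSum {e | Relation.EqvGen (EdgeStep G) e d} f = 0 := by
  refine (coeffSum _).toAddMonoidHom.eq_zero_of_mem_span ?_ hf
  rintro _ ⟨i, j, hadj, hij, rfl⟩ p
  rw [edgeBinomial_eq]
  refine coeffSum_mul_monomial_sub_monomial (fun u => ?_) p
  have hstep : Relation.EqvGen (EdgeStep G) (u + xyExp i j) (u + xyExp j i) :=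
    .rel _ _ ⟨i, j, u, hadj, hij, rfl, rfl⟩
  exact ⟨hstep.symm.trans _ _ _, hstep.trans _ _ _⟩

theorem EdgeBinomialsIsGroebnerBasis.exists_edge_xyExp_le (hGB : EdgeBinomialsIsGroebnerBasis K G)
    {a b : Lex (Fin n ⊕ Fin n) →₀ ℕ} (hab : toLex b < toLex a)
    (hmem : monomial a (1 : K) - monomial b 1 ∈ binomialEdgeIdeal K G) :
    ∃ i j : Fin n, G.Adj i j ∧ i < j ∧ xyExp i j ≤ a := by
  have hne : monomial a (1 : K) - monomial b 1 ≠ 0 :=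
    sub_ne_zero.2 ((monomial_left_injective one_ne_zero).ne hab.ne')
  obtain ⟨i, j, hadj, hij, hle⟩ := hGB _ hmem hne
  rw [leadExp_edgeBinomial hij, leadExp_monomial_sub_monomial hab] at hle
  exact ⟨i, j, hadj, hij, hle⟩

theorem EdgeBinomialsIsGroebnerBasis.adj_of_adj_left (hGB : EdgeBinomialsIsGroebnerBasis K G)
    {i j l : Fin n} (hij : G.Adj i j) (hil : G.Adj i l) (hi : i < j) (hjl : j < l) :
    G.Adj j l := by
  have hmem : monomial (Finsupp.single (yVar i) 1 + xyExp j l) (1 : K) -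
      monomial (Finsupp.single (yVar i) 1 + xyExp l j) 1 ∈ binomialEdgeIdeal K G := by
    have hg : X (yVar j) * edgeBinomial K i l - X (yVar l) * edgeBinomial K i j =
        monomial (Finsupp.single (yVar i) 1 + xyExp j l) (1 : K) -
          monomial (Finsupp.single (yVar i) 1 + xyExp l j) 1 := by
      simp only [monomial_single_add_xyExp, edgeBinomial, xVar, yVar]
      ring
    rw [← hg]
    exact sub_mem (Ideal.mul_mem_left _ _ (edgeBinomial_mem hil (hi.trans hjl)))
      (Ideal.mul_mem_left _ _ (edgeBinomial_mem hij hi))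
  obtain ⟨p, q, hpq, hpq', hle⟩ :=
    hGB.exists_edge_xyExp_le (toLex_add_xyExp_lt hjl _) hmem
  obtain ⟨hp, hq⟩ := apply_ne_zero_of_xyExp_le hle
  obtain rfl : j = p := by simpa [xyExp, xVar, yVar, Finsupp.single_apply] using hp
  obtain rfl | rfl : i = q ∨ l = q := by
    simpa [xyExp, xVar, yVar, Finsupp.single_apply, or_iff_not_imp_left] using hq
  · exact absurd hi hpq'.not_gt
  · exact hpq

theorem EdgeBinomialsIsGroebnerBasis.adj_of_adj_right (hGB : EdgeBinomialsIsGroebnerBasis K G)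
    {i j k : Fin n} (hij : G.Adj i j) (hkj : G.Adj k j) (hik : i < k) (hk : k < j) :
    G.Adj i k := by
  have hmem : monomial (Finsupp.single (xVar j) 1 + xyExp i k) (1 : K) -
      monomial (Finsupp.single (xVar j) 1 + xyExp k i) 1 ∈ binomialEdgeIdeal K G := by
    have hg : X (xVar k) * edgeBinomial K i j - X (xVar i) * edgeBinomial K k j =
        monomial (Finsupp.single (xVar j) 1 + xyExp i k) (1 : K) -
          monomial (Finsupp.single (xVar j) 1 + xyExp k i) 1 := by
      simp only [monomial_single_add_xyExp, edgeBinomial, xVar, yVar]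
      ring
    rw [← hg]
    exact sub_mem (Ideal.mul_mem_left _ _ (edgeBinomial_mem hij (hik.trans hk)))
      (Ideal.mul_mem_left _ _ (edgeBinomial_mem hkj hk))
  obtain ⟨p, q, hpq, hpq', hle⟩ :=
    hGB.exists_edge_xyExp_le (toLex_add_xyExp_lt hik _) hmem
  obtain ⟨hp, hq⟩ := apply_ne_zero_of_xyExp_le hle
  obtain rfl : k = q := by simpa [xyExp, xVar, yVar, Finsupp.single_apply] using hq
  obtain rfl | rfl : j = p ∨ i = p := by
    simpa [xyExp, xVar, yVar, Finsupp.single_apply, or_iff_not_imp_left] using hp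
  · exact absurd hk hpq'.not_gt
  · exact hpq

theorem EdgeBinomialsIsGroebnerBasis.isClosed (hGB : EdgeBinomialsIsGroebnerBasis K G) :
    G.IsClosed := by
  intro i j k l hij hkl hi hk
  constructor
  · rintro rfl hjl
    rcases hjl.lt_or_gt with h | h
    exacts [hGB.adj_of_adj_left hij hkl hi h, (hGB.adj_of_adj_left hkl hij hk h).symm]
  · rintro rfl hik
    rcases hik.lt_or_gt with h | h
    exacts [hGB.adj_of_adj_right hij hkl h hk, (hGB.adj_of_adj_right hkl hij h hi).symm]

end BinomialEdgeIdeal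

open BinomialEdgeIdeal in
theorem groebnerBasis_iff_closed_general (K : Type*) [Field K] {n : ℕ}
    (G : SimpleGraph (Fin n)) :
    (∀ f ∈ binomialEdgeIdeal K G, f ≠ 0 →
        ∃ i j : Fin n, G.Adj i j ∧ i < j ∧ leadExp (edgeBinomial K i j) ≤ leadExp f) ↔
      G.IsClosed := by
  refine ⟨EdgeBinomialsIsGroebnerBasis.isClosed, ?_⟩
  intro hG f hf hf0
  by_contra! hno
  have hnf : ∀ e, ¬ EdgeStep G (leadExp f) e := by
    rintro e ⟨i, j, c, hadj, hij, hd, -⟩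
    exact hno i j hadj hij (by rw [leadExp_edgeBinomial hij, hd]; exact le_add_self)
  have hclass : coeffSum {e | Relation.EqvGen (EdgeStep G) e (leadExp f)} f =
      coeff (leadExp f) f :=
    coeffSum_eq_coeff (.refl _) fun e he hef => toLex.injective <| le_antisymm
      (toLex_le_leadExp he) (toLex_le_of_eqvGen_edgeStep hG hnf hef.symm)
  exact coeff_leadExp_ne_zero hf0 (hclass ▸ coeffSum_eqvGen_eq_zero hf _)

/-- The generators `f_{ij}` (for edges `{i,j}` of `G`, `i < j`) form a Gröbner basis of
`J_G` with respect to the lexicographic order induced by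
`x_1 > … > x_n > y_1 > … > y_n` (that is, the leading monomial of every nonzero element
of `J_G` is divisible by the leading monomial `x_i y_j` of some generator) if and only
if `G` is closed with respect to the given labeling. -/
theorem groebnerBasis_iff_closed (K : Type*) [Field K] {n : ℕ} (hn : 2 ≤ n)
    (G : SimpleGraph (Fin n)) (hv : ∀ v : Fin n, ∃ w, G.Adj v w) :
    (∀ f ∈ binomialEdgeIdeal K G, f ≠ 0 →
        ∃ i j : Fin n, G.Adj i j ∧ i < j ∧ leadExp (edgeBinomial K i j) ≤ leadExp f) ↔
      G.IsClosed :=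
  groebnerBasis_iff_closed_general K G
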